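/- arXiv:2605.31019 — 2 statements merged into one kernel-verified Lean document; each statement's English description precedes it below -/
import Mathlib

section
/- Modulo the ideal I_μ (the annihilator of all Φ_{μ,q}, q ∈ ℕ), one has the identities (U_1 + μσ_1)U_{−1} ≡ U_0(U_0 + kμ − 1) and U_{−1}(U_1 + μσ_1) ≡ (U_0 + kμ)(U_0 + 1). In particular both sides agree when applied to every polynomial Φ_{μ,q}. -/
open MvPolynomial Finset

noncomputable section

/-- Polynomials in the variables `σ_1, …, σ_k` (we use `ℕ`-indexed variables,
the variable `X h` playing the role of `σ_h`). -/
abbrev WPoly : Type := MvPolynomial ℕ ℂ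

/-- The partial derivative `∂_h = ∂/∂σ_h` as a linear endomorphism. -/
def Dop (h : ℕ) : Module.End ℂ WPoly := (MvPolynomial.pderiv h).toLinearMap

/-- Multiplication by a polynomial as a linear endomorphism. -/
def Mop (p : WPoly) : Module.End ℂ WPoly := LinearMap.mulLeft ℂ p

/-- `σ_h`, with the conventions `σ_0 = 1` and `σ_h = 0` for `h > k`. -/
def sig (k h : ℕ) : WPoly := if h = 0 then 1 else if h ≤ k then X h else 0

/-- The Euler operator `E := Σ_{h=1}^k σ_h ∂_h`. -/
def Eop (k : ℕ) : Module.End ℂ WPoly := ∑ h ∈ Icc 1 k, Mop (X h) * Dop h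

/-- `U_0 := Σ_{h=1}^k h σ_h ∂_h`. -/
def U0op (k : ℕ) : Module.End ℂ WPoly := ∑ h ∈ Icc 1 k, (h : ℂ) • (Mop (X h) * Dop h)

/-- `U_{-1} := Σ_{h=0}^{k-1} (k-h) σ_h ∂_{h+1}` (with `σ_0 = 1`). -/
def Um1op (k : ℕ) : Module.End ℂ WPoly :=
  ∑ h ∈ range k, ((k - h : ℕ) : ℂ) • (Mop (sig k h) * Dop (h + 1))

/-- `U_1 := Σ_{h=1}^k (σ_1 σ_h - (h+1) σ_{h+1}) ∂_h` (with `σ_{k+1} = 0`). -/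
def U1op (k : ℕ) : Module.End ℂ WPoly :=
  ∑ h ∈ Icc 1 k, Mop (X 1 * X h - ((h + 1 : ℕ) : ℂ) • sig k (h + 1)) * Dop h

/-- `T^m_μ := ∂_1 ∂_{m-1} + ∂_m (E + μ)`. -/
def Tmu (k : ℕ) (μ : ℂ) (m : ℕ) : Module.End ℂ WPoly :=
  Dop 1 * Dop (m - 1) + Dop m * (Eop k + μ • (1 : Module.End ℂ WPoly))

/-- `A_{p,q} := ∂_p ∂_q - ∂_{p+1} ∂_{q-1}`. -/
def Aop (p q : ℕ) : Module.End ℂ WPoly := Dop p * Dop q - Dop (p + 1) * Dop (q - 1)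

/-- The weight `w(α) := Σ_j j·α_j` of an exponent. -/
def wt (α : ℕ →₀ ℕ) : ℕ := ∑ j ∈ α.support, j * α j

/-- The weight-`r` homogeneous part of a polynomial (`σ_h` has weight `h`). -/
def weightPart (r : ℕ) (p : WPoly) : WPoly :=
  ∑ α ∈ p.support.filter (fun α => wt α = r), monomial α (coeff α p)

/-- `m̃_{q,r}(σ) := q! Σ_{|α| = q, w(α) = r} σ^α / α!`. -/
def mtilde (k q r : ℕ) : WPoly :=
  (q.factorial : ℂ) •
    ∑ α ∈ (Finset.Nat.antidiagonalTuple k q).filter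
        (fun α => ∑ j : Fin k, ((j : ℕ) + 1) * α j = r),
      (((∏ j : Fin k, Nat.factorial (α j)) : ℕ) : ℂ)⁻¹ • ∏ j : Fin k, X ((j : ℕ) + 1) ^ α j

/-- `x := Σ_{h=1}^k (-1)^h σ_h`. -/
def xpoly (k : ℕ) : WPoly := ∑ h ∈ Icc 1 k, C ((-1 : ℂ) ^ h) * X h

/-- `Γ_{μ,p} := (-1)^p μ(μ+1)⋯(μ+p-1)/p!`, the coefficient of `x^p` in `(1+x)^{-μ}`. -/
def GammaC (μ : ℂ) (p : ℕ) : ℂ := (-1 : ℂ) ^ p * (∏ i ∈ range p, (μ + i)) / (p.factorial : ℂ)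

/-- `Φ_{μ,q}` : the weight-`q` part of the Taylor expansion at `σ = 0` of
`(1 + Σ_{h=1}^k (-1)^h σ_h)^{-μ}`.  Since the weight-`q` part of `x^p` vanishes for
`p > q`, it suffices to truncate the series at order `q`. -/
def Phi (k : ℕ) (μ : ℂ) (q : ℕ) : WPoly :=
  weightPart q (∑ p ∈ range (q + 1), GammaC μ p • xpoly k ^ p)

/-- `P_σ(a) := a^k + Σ_{h=1}^k (-1)^h σ_h a^{k-h}` as a polynomial in `σ` (with `a ∈ ℂ` fixed). -/
def Ppol (k : ℕ) (a : ℂ) : WPoly :=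
  C (a ^ k) + ∑ h ∈ Icc 1 k, C ((-1 : ℂ) ^ h * a ^ (k - h)) * X h

/-- `P'_σ(a) = ∂P_σ(a)/∂a` as a polynomial in `σ`. -/
def PpolDeriv (k : ℕ) (a : ℂ) : WPoly :=
  C ((k : ℂ) * a ^ (k - 1)) +
    ∑ h ∈ Icc 1 k, C ((-1 : ℂ) ^ h * ((k - h : ℕ) : ℂ) * a ^ (k - h - 1)) * X h

/-!
`Φ_{μ,q}` has an explicit coefficient at every monomial `σ^α` of weight `q`: only the term
`Γ_{μ,|α|} x^{|α|}` of the series contributes, so by the multinomial theorem the coefficient is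
`c(α) = Γ_{μ,|α|} · multinomial(α) · ∏_j ((-1)^j)^{α_j}`. These coefficients satisfy the
one-step recursion `(α_j + 1) c(α + e_j) = (-1)^{j+1} (μ + |α|) c(α)`, and comparing
coefficients with it gives the ladder relations `U_0 Φ_q = q Φ_q`,
`U_{-1} Φ_{q+1} = (kμ + q) Φ_q` and `(U_1 + μσ_1) Φ_q = (q + 1) Φ_{q+1}`; the last one goes
through `U_1 + μσ_1 = σ_1 (E + μ) - Σ (h+1) σ_{h+1} ∂_h` and `(E + μ) Φ_q = ∂_1 Φ_{q+1}`.
Both identities are compositions of these relations.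
-/

theorem Finsupp.multinomial_add_single_mul {σ : Type*} (f : σ →₀ ℕ) (a : σ) :
    (f + Finsupp.single a 1).multinomial * (f a + 1) = (f.degree + 1) * f.multinomial := by
  classical
  have hupd : (f + Finsupp.single a 1).update a 0 = f.update a 0 := by
    ext i; rcases eq_or_ne i a with rfl | h <;> simp [Finsupp.update_apply, *]
  have hdeg : ((f + Finsupp.single a 1).sum fun _ => id) = f.degree + 1 := by
    change Finsupp.degree _ = _
    simp
  rw [Finsupp.multinomial_update a (f + Finsupp.single a 1), Finsupp.multinomial_update a f, hupd,
    hdeg]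
  change _ = _ * ((Finsupp.degree f).choose (f a) * _)
  simp only [Finsupp.add_apply, Finsupp.single_eq_same]
  rw [mul_right_comm, ← Nat.add_one_mul_choose_eq]
  ring

theorem MvPolynomial.coeff_X_mul_pderiv_self {R σ : Type*} [CommSemiring R] (i : σ)
    (p : MvPolynomial σ R) (α : σ →₀ ℕ) :
    coeff α (X i * pderiv i p) = α i * coeff α p := by
  classical
  rw [coeff_X_mul']
  split_ifs with h
  · have hi : 1 ≤ α i := Nat.one_le_iff_ne_zero.2 (Finsupp.mem_support_iff.1 h)
    rw [coeff_pderiv, tsub_add_cancel_of_le (Finsupp.single_le_iff.2 hi), mul_comm,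
      Finsupp.tsub_apply, Finsupp.single_eq_same, ← Nat.cast_add_one, Nat.sub_add_cancel hi]
  · simp [Finsupp.notMem_support_iff.1 h]

lemma wt_eq_weight (α : ℕ →₀ ℕ) : wt α = Finsupp.weight (fun j => j) α := by
  simp only [wt, Finsupp.weight_apply, Finsupp.sum, smul_eq_mul, mul_comm]

lemma wt_add (α β : ℕ →₀ ℕ) : wt (α + β) = wt α + wt β := by
  simp only [wt_eq_weight, map_add]

lemma wt_single_one (j : ℕ) : wt (Finsupp.single j 1) = j := by
  simp [wt_eq_weight, Finsupp.weight_single]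

section SupportInIcc

variable {k : ℕ} {α : ℕ →₀ ℕ}

lemma wt_eq_sum_Icc (hα : α.support ⊆ Icc 1 k) : wt α = ∑ j ∈ Icc 1 k, j * α j :=
  Finset.sum_subset hα fun _ _ hj => by rw [Finsupp.notMem_support_iff.1 hj, mul_zero]

lemma degree_eq_sum_Icc (hα : α.support ⊆ Icc 1 k) : α.degree = ∑ j ∈ Icc 1 k, α j :=
  Finset.sum_subset hα fun _ _ hj => Finsupp.notMem_support_iff.1 hj

lemma degree_le_wt (hα : α.support ⊆ Icc 1 k) : α.degree ≤ wt α :=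
  Finset.sum_le_sum fun _ hj => Nat.le_mul_of_pos_left _ (mem_Icc.1 (hα hj)).1

lemma wt_eq_add_sum_Icc_succ (hα : α.support ⊆ Icc 1 k) :
    wt α = α 1 + ∑ h ∈ Icc 1 k, (h + 1) * α (h + 1) := by
  have hk : α (k + 1) = 0 := Finsupp.notMem_support_iff.1 fun h => by
    have := mem_Icc.1 (hα h); omega
  have hshift := (Finset.sum_range_succ (fun x => (x + 1) * α (x + 1)) k).symm.trans
    (Finset.sum_range_succ' (fun x => (x + 1) * α (x + 1)) k)
  rw [wt_eq_sum_Icc hα, ← Finset.Ico_add_one_right_eq_Icc, Finset.sum_Ico_eq_sum_range,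
    Finset.sum_Ico_eq_sum_range]
  simp only [Nat.add_sub_cancel, hk, mul_zero, add_zero] at hshift ⊢
  simp only [add_comm 1] at hshift ⊢
  rw [hshift, add_comm, zero_add, one_mul]

end SupportInIcc

lemma coeff_weightPart (r : ℕ) (p : WPoly) (α : ℕ →₀ ℕ) :
    coeff α (weightPart r p) = if wt α = r then coeff α p else 0 := by
  classical
  simp only [weightPart, coeff_sum, coeff_monomial, Finset.sum_ite_eq', Finset.mem_filter,
    MvPolynomial.mem_support_iff]
  by_cases h : coeff α p = 0 <;> simp [h]

def xcoeff (k : ℕ) : ℕ →₀ ℂ := ∑ h ∈ Icc 1 k, Finsupp.single h ((-1 : ℂ) ^ h)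

lemma xcoeff_apply (k j : ℕ) : xcoeff k j = if j ∈ Icc 1 k then (-1 : ℂ) ^ j else 0 := by
  classical
  simp [xcoeff, Finsupp.finsetSum_apply, Finsupp.single_apply]

lemma xcoeff_mul_xcoeff_succ {k h : ℕ} (h1 : 1 ≤ h) (hk : h < k) :
    xcoeff k h * xcoeff k (h + 1) = -1 := by
  rw [xcoeff_apply, xcoeff_apply, if_pos (mem_Icc.2 ⟨h1, hk.le⟩),
    if_pos (mem_Icc.2 ⟨by omega, hk⟩), ← pow_add, show h + (h + 1) = 2 * h + 1 by ring, pow_succ,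
    pow_mul]
  norm_num

lemma xpoly_eq_linearCombination (k : ℕ) : xpoly k = (xcoeff k).linearCombination ℂ X := by
  simp [xpoly, xcoeff, map_sum, Finsupp.linearCombination_single, smul_eq_C_mul]

lemma coeff_xpoly_pow (k p : ℕ) (α : ℕ →₀ ℕ) :
    coeff α (xpoly k ^ p) =
      if α.degree = p then α.multinomial * α.prod fun j m => xcoeff k j ^ m else 0 := by
  rw [xpoly_eq_linearCombination, coeff_linearCombination_X_pow]
  rfl

lemma GammaC_succ (μ : ℂ) (n : ℕ) :
    ((n : ℂ) + 1) * GammaC μ (n + 1) = -(μ + n) * GammaC μ n := by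
  have : ((n : ℂ) + 1) ≠ 0 := Nat.cast_add_one_ne_zero n
  simp only [GammaC, pow_succ, Finset.prod_range_succ, Nat.factorial_succ, Nat.cast_mul]
  push_cast
  field_simp

def phiCoeff (k : ℕ) (μ : ℂ) (α : ℕ →₀ ℕ) : ℂ :=
  GammaC μ α.degree * α.multinomial * α.prod fun j m => xcoeff k j ^ m

section PhiCoeff

variable {k : ℕ} {μ : ℂ}

lemma phiCoeff_add_single (α : ℕ →₀ ℕ) (j : ℕ) :
    ((α j : ℂ) + 1) * phiCoeff k μ (α + Finsupp.single j 1) =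
      -xcoeff k j * (μ + α.degree) * phiCoeff k μ α := by
  have hmult : ((α + Finsupp.single j 1).multinomial : ℂ) * ((α j : ℂ) + 1) =
      ((α.degree : ℂ) + 1) * α.multinomial := by
    exact_mod_cast Finsupp.multinomial_add_single_mul α j
  have hprod : ((α + Finsupp.single j 1).prod fun j m => xcoeff k j ^ m) =
      xcoeff k j * α.prod fun j m => xcoeff k j ^ m := by
    rw [Finsupp.prod_add_index' (fun _ => pow_zero _) (fun _ _ _ => pow_add _ _ _), mul_comm]
    simp
  simp only [phiCoeff, map_add, Finsupp.degree_single, hprod]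
  linear_combination (xcoeff k j * α.prod fun j m => xcoeff k j ^ m) *
    (GammaC μ (α.degree + 1) * hmult + α.multinomial * GammaC_succ μ α.degree)

lemma support_subset_of_phiCoeff_ne_zero {α : ℕ →₀ ℕ} (h : phiCoeff k μ α ≠ 0) :
    α.support ⊆ Icc 1 k := by
  intro j hj
  by_contra hjk
  apply h
  rw [phiCoeff, Finsupp.prod, Finset.prod_eq_zero hj (by rw [xcoeff_apply, if_neg hjk,
    zero_pow (Finsupp.mem_support_iff.1 hj)]), mul_zero]

lemma coeff_Phi (q : ℕ) (α : ℕ →₀ ℕ) :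
    coeff α (Phi k μ q) = if wt α = q then phiCoeff k μ α else 0 := by
  rw [Phi, coeff_weightPart]
  split_ifs with hq
  swap; · rfl
  simp only [coeff_sum, coeff_smul, coeff_xpoly_pow, smul_eq_mul, mul_ite, mul_zero,
    Finset.sum_ite_eq, Finset.mem_range]
  split_ifs with hdeg
  · rw [phiCoeff, mul_assoc]
  · by_contra hne
    exact hdeg (Nat.lt_succ_of_le
      (hq ▸ degree_le_wt (support_subset_of_phiCoeff_ne_zero (Ne.symm hne))))

lemma coeff_pderiv_Phi (q j : ℕ) (α : ℕ →₀ ℕ) :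
    coeff α (pderiv j (Phi k μ q)) =
      if wt α + j = q then -xcoeff k j * (μ + α.degree) * phiCoeff k μ α else 0 := by
  rw [coeff_pderiv, coeff_Phi, wt_add, wt_single_one]
  split_ifs
  · rw [mul_comm, phiCoeff_add_single]
  · rw [zero_mul]

lemma coeff_sig_mul_pderiv_Phi {i : ℕ} (hi : 1 ≤ i) (q j : ℕ) (α : ℕ →₀ ℕ) :
    coeff α (sig k i * pderiv j (Phi k μ q)) =
      if wt α + j = q + i then xcoeff k i * xcoeff k j * α i * phiCoeff k μ α else 0 := by
  classical
  by_cases hik : i ≤ k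
  swap
  · simp [sig, hik, xcoeff_apply, Nat.one_le_iff_ne_zero.1 hi]
  have hsq : xcoeff k i * xcoeff k i = 1 := by
    rw [xcoeff_apply, if_pos (mem_Icc.2 ⟨hi, hik⟩), ← pow_add, ← two_mul, pow_mul]
    norm_num
  rw [sig, if_neg (Nat.one_le_iff_ne_zero.1 hi), if_pos hik, coeff_X_mul']
  by_cases hα : i ∈ α.support
  · obtain ⟨β, rfl⟩ : ∃ β, α = β + Finsupp.single i 1 := ⟨α - Finsupp.single i 1,
      (tsub_add_cancel_of_le (Finsupp.single_le_iff.2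
        (Nat.one_le_iff_ne_zero.2 (Finsupp.mem_support_iff.1 hα)))).symm⟩
    rw [if_pos hα, add_tsub_cancel_right, coeff_pderiv_Phi, wt_add, wt_single_one]
    simp only [show wt β + i + j = q + i ↔ wt β + j = q by omega]
    split_ifs
    · simp only [Finsupp.add_apply, Finsupp.single_eq_same, Nat.cast_add, Nat.cast_one]
      linear_combination (xcoeff k j * (μ + β.degree) * phiCoeff k μ β) * hsq
        - xcoeff k i * xcoeff k j * phiCoeff_add_single β i
    · rfl
  · simp [hα, Finsupp.notMem_support_iff.1 hα]

end PhiCoeff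

lemma coeff_sum_smul_Mop_X_mul_Dop (s : Finset ℕ) (w : ℕ → ℂ) (p : WPoly) (α : ℕ →₀ ℕ) :
    coeff α ((∑ h ∈ s, w h • (Mop (X h) * Dop h)) p) = (∑ h ∈ s, w h * α h) * coeff α p := by
  simp only [LinearMap.sum_apply, LinearMap.smul_apply, Module.End.mul_apply, Mop, Dop,
    LinearMap.mulLeft_apply, Derivation.coeFn_coe, coeff_sum, coeff_smul,
    coeff_X_mul_pderiv_self, smul_eq_mul, Finset.sum_mul, mul_assoc]

lemma Um1op_apply (k : ℕ) (p : WPoly) :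
    Um1op k p = (k : ℂ) • pderiv 1 p +
      ∑ h ∈ Icc 1 k, ((k - h : ℕ) : ℂ) • (sig k h * pderiv (h + 1) p) := by
  rw [Um1op, LinearMap.sum_apply]
  calc _ = ∑ h ∈ range (k + 1), ((k - h : ℕ) : ℂ) • (sig k h * pderiv (h + 1) p) := by
        rw [Finset.sum_range_succ]
        simp [Mop, Dop]
    _ = _ := by
        rw [Finset.range_eq_Ico, Finset.sum_eq_sum_Ico_succ_bot (Nat.succ_pos k), zero_add,
          Nat.succ_eq_add_one, Finset.Ico_add_one_right_eq_Icc]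
        simp [sig]

lemma U1op_add_smul_apply (k : ℕ) (μ : ℂ) (p : WPoly) :
    (U1op k + μ • Mop (X 1)) p = X 1 * (Eop k + μ • (1 : Module.End ℂ WPoly)) p -
      ∑ h ∈ Icc 1 k, ((h + 1 : ℕ) : ℂ) • (sig k (h + 1) * pderiv h p) := by
  simp only [U1op, Eop, LinearMap.add_apply, LinearMap.sum_apply, LinearMap.smul_apply,
    Module.End.mul_apply, Module.End.one_apply, Mop, Dop, LinearMap.mulLeft_apply,
    Derivation.coeFn_coe, sub_mul, Finset.sum_sub_distrib, mul_add, Finset.mul_sum,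
    smul_mul_assoc, mul_smul_comm, mul_assoc]
  abel

section Ladder

variable {k : ℕ} (μ : ℂ)

lemma U0op_Phi (q : ℕ) : U0op k (Phi k μ q) = (q : ℂ) • Phi k μ q := by
  ext α
  rw [U0op, coeff_sum_smul_Mop_X_mul_Dop, coeff_smul, coeff_Phi, smul_eq_mul]
  split_ifs with hq
  · by_cases hc : phiCoeff k μ α = 0
    · simp [hc]
    · rw [← hq, wt_eq_sum_Icc (support_subset_of_phiCoeff_ne_zero hc)]
      push_cast
      rfl
  · simp

lemma Eop_add_smul_Phi (hk : 1 ≤ k) (q : ℕ) :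
    (Eop k + μ • (1 : Module.End ℂ WPoly)) (Phi k μ q) = pderiv 1 (Phi k μ (q + 1)) := by
  have hE : Eop k = ∑ h ∈ Icc 1 k, (1 : ℂ) • (Mop (X h) * Dop h) := by
    simp only [Eop, one_smul]
  ext α
  rw [LinearMap.add_apply, hE, coeff_add, coeff_sum_smul_Mop_X_mul_Dop, LinearMap.smul_apply,
    Module.End.one_apply, coeff_smul, coeff_Phi, coeff_pderiv_Phi, xcoeff_apply,
    if_pos (mem_Icc.2 ⟨le_rfl, hk⟩)]
  simp only [Nat.add_right_cancel_iff, one_mul, smul_eq_mul]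
  split_ifs with hq
  · by_cases hc : phiCoeff k μ α = 0
    · simp [hc]
    · rw [degree_eq_sum_Icc (support_subset_of_phiCoeff_ne_zero hc)]
      push_cast
      ring
  · simp

lemma coeff_Um1op_Phi (hk : 1 ≤ k) (q : ℕ) (α : ℕ →₀ ℕ) :
    coeff α (Um1op k (Phi k μ q)) =
      if wt α + 1 = q then ((k : ℂ) * μ + wt α) * phiCoeff k μ α else 0 := by
  have hterm : ∀ h ∈ Icc 1 k,
      ((k - h : ℕ) : ℂ) * coeff α (sig k h * pderiv (h + 1) (Phi k μ q)) =
        if wt α + 1 = q then -(((k - h : ℕ) : ℂ) * α h * phiCoeff k μ α) else 0 := by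
    intro h hh
    obtain ⟨h1, hhk⟩ := mem_Icc.1 hh
    rw [coeff_sig_mul_pderiv_Phi h1]
    simp only [show wt α + (h + 1) = q + h ↔ wt α + 1 = q by omega]
    split_ifs
    · rcases hhk.lt_or_eq with hlt | rfl
      · linear_combination (((k - h : ℕ) : ℂ) * α h * phiCoeff k μ α) *
          xcoeff_mul_xcoeff_succ h1 hlt
      · simp
    · simp
  rw [Um1op_apply, coeff_add, coeff_smul, coeff_sum]
  simp only [coeff_smul, smul_eq_mul]
  rw [Finset.sum_congr rfl hterm, coeff_pderiv_Phi, xcoeff_apply, if_pos (mem_Icc.2 ⟨le_rfl, hk⟩)]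
  split_ifs with hq
  · by_cases hc : phiCoeff k μ α = 0
    · simp [hc]
    have hα := support_subset_of_phiCoeff_ne_zero hc
    rw [degree_eq_sum_Icc hα, wt_eq_sum_Icc hα]
    have hsum : ∑ h ∈ Icc 1 k, ((k : ℂ) * α h - ((k - h : ℕ) : ℂ) * α h) =
        ∑ h ∈ Icc 1 k, (h : ℂ) * α h :=
      Finset.sum_congr rfl fun h hh => by rw [Nat.cast_sub (mem_Icc.1 hh).2]; ring
    rw [Finset.sum_sub_distrib, ← Finset.mul_sum] at hsum
    push_cast
    rw [Finset.sum_neg_distrib, ← Finset.sum_mul]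
    linear_combination phiCoeff k μ α * hsum
  · simp

lemma Um1op_Phi_succ (hk : 1 ≤ k) (q : ℕ) :
    Um1op k (Phi k μ (q + 1)) = ((k : ℂ) * μ + q) • Phi k μ q := by
  ext α
  rw [coeff_Um1op_Phi μ hk, coeff_smul, coeff_Phi, smul_eq_mul]
  simp only [Nat.add_right_cancel_iff]
  split_ifs with hq
  · rw [hq]
  · rw [mul_zero]

lemma Um1op_Phi_zero (hk : 1 ≤ k) : Um1op k (Phi k μ 0) = 0 := by
  ext α
  simp [coeff_Um1op_Phi μ hk]

lemma U1op_add_smul_Phi (hk : 1 ≤ k) (q : ℕ) :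
    (U1op k + μ • Mop (X 1)) (Phi k μ q) = ((q : ℂ) + 1) • Phi k μ (q + 1) := by
  ext α
  rw [U1op_add_smul_apply, Eop_add_smul_Phi μ hk, coeff_sub, coeff_X_mul_pderiv_self, coeff_sum,
    coeff_smul, coeff_Phi, smul_eq_mul]
  simp only [coeff_smul, smul_eq_mul, coeff_sig_mul_pderiv_Phi (Nat.le_add_left 1 _),
    show ∀ h, wt α + h = q + (h + 1) ↔ wt α = q + 1 from fun h => by omega]
  split_ifs with hq
  · by_cases hc : phiCoeff k μ α = 0
    · simp [hc]
    have hα := support_subset_of_phiCoeff_ne_zero hc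
    have hterm : ∀ h ∈ Icc 1 k, ((h + 1 : ℕ) : ℂ) * (xcoeff k (h + 1) * xcoeff k h * α (h + 1) *
        phiCoeff k μ α) = -((((h + 1) * α (h + 1) : ℕ) : ℂ) * phiCoeff k μ α) := by
      intro h hh
      obtain ⟨h1, hhk⟩ := mem_Icc.1 hh
      rcases hhk.lt_or_eq with hlt | rfl
      · push_cast
        linear_combination ((h + 1 : ℂ) * α (h + 1) * phiCoeff k μ α) *
          xcoeff_mul_xcoeff_succ h1 hlt
      · have : α (h + 1) = 0 := Finsupp.notMem_support_iff.1 fun hm => by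
          have := mem_Icc.1 (hα hm); omega
        simp [this]
    have hwt : ((wt α : ℕ) : ℂ) = q + 1 := by rw [hq]; push_cast; rfl
    rw [wt_eq_add_sum_Icc_succ hα, Nat.cast_add, Nat.cast_sum] at hwt
    rw [Finset.sum_congr rfl hterm, Finset.sum_neg_distrib, ← Finset.sum_mul]
    linear_combination phiCoeff k μ α * hwt
  · simp

end Ladder

/-- Modulo the ideal `I_μ` (the annihilator of all the `Φ_{μ,q}`), one has
`(U_1 + μσ_1) U_{-1} ≡ U_0 (U_0 + kμ - 1)` and `U_{-1} (U_1 + μσ_1) ≡ (U_0 + kμ)(U_0 + 1)`;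
equivalently, both sides agree when applied to every polynomial `Φ_{μ,q}`. -/
theorem operator_identities_mod_Imu (k : ℕ) (hk : 1 ≤ k) (μ : ℂ) (q : ℕ) :
    ((U1op k + μ • Mop (X 1)) * Um1op k) (Phi k μ q) =
      (U0op k * (U0op k + ((k : ℂ) * μ - 1) • (1 : Module.End ℂ WPoly))) (Phi k μ q) ∧
    (Um1op k * (U1op k + μ • Mop (X 1))) (Phi k μ q) =
      ((U0op k + ((k : ℂ) * μ) • (1 : Module.End ℂ WPoly)) *
        (U0op k + (1 : Module.End ℂ WPoly))) (Phi k μ q) := by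
  simp only [Module.End.mul_apply]
  constructor
  · cases q with
    | zero => simp [Um1op_Phi_zero μ hk, U0op_Phi]
    | succ q =>
      rw [Um1op_Phi_succ μ hk, map_smul, U1op_add_smul_Phi μ hk]
      simp only [LinearMap.add_apply, LinearMap.smul_apply, Module.End.one_apply, map_add,
        map_smul, U0op_Phi]
      push_cast
      module
  · rw [U1op_add_smul_Phi μ hk, map_smul, Um1op_Phi_succ μ hk]
    simp only [LinearMap.add_apply, LinearMap.smul_apply, Module.End.one_apply, map_add,
      map_smul, U0op_Phi]
    module

end
end

section
/- In the Weyl algebra, for j ∈ [2,k] one has ∂_j(U_1 + μσ_1) + (λ+1)∂_{j−1} = −Σ_{h=1}^{k−1}(h+1)σ_{h+1}A_{h,j} + σ_1 T^j_μ − ∂_{j−1}(U_0 − λ), and for j = 1: ∂_1(U_1 + μσ_1) − (λ+1)(E+μ) = (E+μ)(U_0 − λ) − Σ_{h=1}^{k−1}(h+1)σ_{h+1}T^{h+1}_μ. -/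
open MvPolynomial Finset

noncomputable section

/-!
Write `U_1 = σ_1 E - S` with `S := Σ_{h=1}^{k-1} (h+1) σ_{h+1} ∂_h`. Both formulas then follow by
moving every `∂_j` to the right with the Weyl relations `[∂_j, σ_i] = δ_{ij}`, which give
`[∂_j, E] = ∂_j`, `[∂_j, U_0] = j ∂_j` and `[∂_j, S] = j ∂_{j-1}` (zero for `j = 1`), and by
recognising `Σ_{h=1}^{k-1} (h+1) σ_{h+1} ∂_{h+1} = U_0 - σ_1 ∂_1` and `[E, U_0] = 0`.
-/

theorem MvPolynomial.pderiv_pderiv_comm {R σ : Type*} [CommSemiring R] (i j : σ)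
    (f : MvPolynomial σ R) : pderiv i (pderiv j f) = pderiv j (pderiv i f) := by
  induction f using MvPolynomial.induction_on' with
  | monomial s c =>
    rcases eq_or_ne i j with rfl | hij
    · rfl
    · simp only [pderiv_monomial, Finsupp.tsub_apply, Finsupp.single_eq_of_ne hij,
        Finsupp.single_eq_of_ne hij.symm, tsub_zero, tsub_tsub, add_comm (Finsupp.single i 1),
        mul_right_comm]
  | add p q hp hq => simp only [map_add, hp, hq]

lemma Mop_eq_lmul (p : WPoly) : Mop p = Algebra.lmul ℂ WPoly p := rfl

lemma Mop_mul (p q : WPoly) : Mop (p * q) = Mop p * Mop q := map_mul (Algebra.lmul ℂ WPoly) p q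

lemma Dop_mul_Dop_comm (a b : ℕ) : Dop a * Dop b = Dop b * Dop a :=
  LinearMap.ext (pderiv_pderiv_comm a b)

lemma Dop_mul_Mop (h : ℕ) (p : WPoly) :
    Dop h * Mop p = Mop p * Dop h + Mop (pderiv h p) := by
  refine LinearMap.ext fun f => ?_
  simp only [Dop, Mop, Module.End.mul_apply, LinearMap.add_apply, LinearMap.mulLeft_apply,
    Derivation.coeFn_coe, pderiv_mul]
  ring

lemma Dop_mul_Mop_X (h i : ℕ) :
    Dop h * Mop (X i) = Mop (X i) * Dop h + if h = i then 1 else 0 := by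
  rw [Dop_mul_Mop, pderiv_X]
  rcases eq_or_ne h i with rfl | hne
  · rw [Pi.single_eq_same, if_pos rfl, Mop_eq_lmul 1, map_one]
  · rw [Pi.single_eq_of_ne hne.symm, if_neg hne, Mop_eq_lmul 0, map_zero]

lemma Dop_mul_sum_Mop_X_mul_Dop (s : Finset ℕ) (c : ℕ → ℂ) (a : ℕ → ℕ) (j : ℕ) :
    Dop j * ∑ h ∈ s, c h • (Mop (X (a h)) * Dop h) =
      (∑ h ∈ s, c h • (Mop (X (a h)) * Dop h)) * Dop j +
        ∑ h ∈ s, if j = a h then c h • Dop h else 0 := by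
  rw [mul_sum, sum_mul, ← sum_add_distrib]
  refine sum_congr rfl fun h _ => ?_
  rw [mul_smul_comm, ← mul_assoc, Dop_mul_Mop_X, add_mul, mul_assoc, Dop_mul_Dop_comm j h,
    ← mul_assoc, smul_mul_assoc, smul_add]
  split_ifs <;> simp

lemma commute_Mop_X_mul_Dop (h i : ℕ) :
    Commute (Mop (X h) * Dop h) (Mop (X i) * Dop i) := by
  rcases eq_or_ne h i with rfl | hne
  · exact Commute.refl _
  · have hnormal : ∀ a b : ℕ, a ≠ b →
        Mop (X a) * Dop a * (Mop (X b) * Dop b) = Mop (X a * X b) * (Dop a * Dop b) := by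
      intro a b hab
      rw [mul_assoc, ← mul_assoc (Dop a), Dop_mul_Mop_X, if_neg hab, add_zero, Mop_mul,
        mul_assoc, mul_assoc]
    rw [Commute, SemiconjBy, hnormal h i hne, hnormal i h hne.symm, mul_comm (X i),
      Dop_mul_Dop_comm i]

lemma Eop_commute_U0op (k : ℕ) : Commute (Eop k) (U0op k) :=
  Commute.sum_left _ _ _ fun h _ => Commute.sum_right _ _ _ fun i _ =>
    (commute_Mop_X_mul_Dop h i).smul_right _

section

variable {k j : ℕ}

lemma Dop_mul_Eop (hj : j ∈ Icc 1 k) : Dop j * Eop k = Eop k * Dop j + Dop j := by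
  have hE : Eop k = ∑ h ∈ Icc 1 k, (1 : ℂ) • (Mop (X h) * Dop h) := by simp [Eop]
  rw [hE, Dop_mul_sum_Mop_X_mul_Dop, sum_ite_eq, if_pos hj, one_smul]

lemma Dop_mul_U0op (hj : j ∈ Icc 1 k) : Dop j * U0op k = U0op k * Dop j + (j : ℂ) • Dop j := by
  rw [U0op, Dop_mul_sum_Mop_X_mul_Dop, sum_ite_eq, if_pos hj]

def Sop (k : ℕ) : Module.End ℂ WPoly :=
  ∑ h ∈ Icc 1 (k - 1), ((h + 1 : ℕ) : ℂ) • (Mop (X (h + 1)) * Dop h)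

lemma Dop_mul_Sop (hj : j ∈ Icc 2 k) : Dop j * Sop k = Sop k * Dop j + (j : ℂ) • Dop (j - 1) := by
  obtain ⟨hj2, hjk⟩ := mem_Icc.mp hj
  rw [Sop, Dop_mul_sum_Mop_X_mul_Dop]
  simp only [show ∀ h : ℕ, (j = h + 1) = (j - 1 = h) from fun h => propext (by omega)]
  rw [sum_ite_eq, if_pos (mem_Icc.mpr ⟨by omega, by omega⟩), Nat.sub_add_cancel (by omega)]

lemma Dop_one_mul_Sop : Dop 1 * Sop k = Sop k * Dop 1 := by
  have h0 : ∑ h ∈ Icc 1 (k - 1), (if 1 = h + 1 then ((h + 1 : ℕ) : ℂ) • Dop h else 0) = 0 :=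
    sum_eq_zero fun h hh => if_neg (by rw [mem_Icc] at hh; omega)
  rw [Sop, Dop_mul_sum_Mop_X_mul_Dop, h0, add_zero]

lemma U1op_eq (k : ℕ) : U1op k = Mop (X 1) * Eop k - Sop k := by
  have hS : Sop k = ∑ h ∈ Icc 1 k, ((h + 1 : ℕ) : ℂ) • (Mop (sig k (h + 1)) * Dop h) := by
    rw [Sop, show Icc 1 (k - 1) = (Icc 1 k).filter (· + 1 ≤ k) by ext; simp; omega, sum_filter]
    refine sum_congr rfl fun h _ => ?_
    by_cases hh : h + 1 ≤ k <;> simp [sig, hh, Mop_eq_lmul]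
  rw [hS, Eop, mul_sum, ← sum_sub_distrib]
  refine sum_congr rfl fun h _ => ?_
  simp only [Mop_eq_lmul, map_sub, map_mul, map_smul, sub_mul, smul_mul_assoc, mul_assoc]

lemma sum_Mop_X_succ_mul_Dop_succ (hk : 1 ≤ k) :
    ∑ h ∈ Icc 1 (k - 1), ((h + 1 : ℕ) : ℂ) • (Mop (X (h + 1)) * Dop (h + 1)) =
      U0op k - Mop (X 1) * Dop 1 := by
  obtain ⟨m, rfl⟩ : ∃ m, k = m + 1 := ⟨k - 1, by omega⟩
  rw [Nat.add_sub_cancel, U0op, ← insert_Icc_add_one_left_eq_Icc (show 1 ≤ m + 1 by omega),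
    sum_insert (by simp), ← map_add_right_Icc 1 m 1, sum_map]
  simp only [addRightEmbedding_apply, Nat.cast_one, one_smul, add_sub_cancel_left]

lemma sum_Mop_X_mul_Aop (hk : 1 ≤ k) :
    ∑ h ∈ Icc 1 (k - 1), ((h + 1 : ℕ) : ℂ) • (Mop (X (h + 1)) * Aop h j) =
      Sop k * Dop j - (U0op k - Mop (X 1) * Dop 1) * Dop (j - 1) := by
  simp only [Aop, ← sum_Mop_X_succ_mul_Dop_succ hk, Sop, sum_mul, ← sum_sub_distrib, mul_sub,
    smul_sub, smul_mul_assoc, mul_assoc]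

lemma sum_Mop_X_mul_Tmu (hk : 1 ≤ k) (μ : ℂ) :
    ∑ h ∈ Icc 1 (k - 1), ((h + 1 : ℕ) : ℂ) • (Mop (X (h + 1)) * Tmu k μ (h + 1)) =
      Sop k * Dop 1 + (U0op k - Mop (X 1) * Dop 1) * (Eop k + μ • 1) := by
  simp only [Tmu, Nat.add_sub_cancel, Dop_mul_Dop_comm 1, ← sum_Mop_X_succ_mul_Dop_succ hk, Sop,
    sum_mul, ← sum_add_distrib, mul_add, smul_add, smul_mul_assoc, mul_assoc]

lemma magic_formula_Fj_of_mem_Icc (hj : j ∈ Icc 2 k) (μ lam : ℂ) :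
    Dop j * (U1op k + μ • Mop (X 1)) + (lam + 1) • Dop (j - 1) =
      -(∑ h ∈ Icc 1 (k - 1), ((h + 1 : ℕ) : ℂ) • (Mop (X (h + 1)) * Aop h j)) +
        Mop (X 1) * Tmu k μ j - Dop (j - 1) * (U0op k - lam • (1 : Module.End ℂ WPoly)) := by
  obtain ⟨hj2, hjk⟩ := mem_Icc.mp hj
  have hX : Dop j * Mop (X 1) = Mop (X 1) * Dop j := by
    rw [Dop_mul_Mop_X, if_neg (by omega), add_zero]
  have hE : Dop j * Eop k = Eop k * Dop j + Dop j := Dop_mul_Eop (mem_Icc.mpr ⟨by omega, hjk⟩)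
  have hU1 : Dop j * U1op k =
      Mop (X 1) * (Eop k * Dop j + Dop j) - (Sop k * Dop j + (j : ℂ) • Dop (j - 1)) := by
    rw [U1op_eq, mul_sub, ← mul_assoc, hX, mul_assoc, hE, Dop_mul_Sop hj]
  have hU0 : Dop (j - 1) * U0op k = U0op k * Dop (j - 1) + ((j : ℂ) - 1) • Dop (j - 1) := by
    rw [Dop_mul_U0op (mem_Icc.mpr ⟨by omega, by omega⟩), Nat.cast_sub (by omega), Nat.cast_one]
  rw [mul_add, hU1, mul_smul_comm, hX, sum_Mop_X_mul_Aop (by omega), Tmu]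
  simp only [mul_add, mul_sub, sub_mul, mul_smul_comm, mul_one, mul_assoc, hE, hU0]
  module

lemma magic_formula_F1 (hk : 1 ≤ k) (μ lam : ℂ) :
    Dop 1 * (U1op k + μ • Mop (X 1)) - (lam + 1) • (Eop k + μ • (1 : Module.End ℂ WPoly)) =
      (Eop k + μ • (1 : Module.End ℂ WPoly)) * (U0op k - lam • (1 : Module.End ℂ WPoly)) -
        ∑ h ∈ Icc 1 (k - 1), ((h + 1 : ℕ) : ℂ) • (Mop (X (h + 1)) * Tmu k μ (h + 1)) := by
  have hX : Dop 1 * Mop (X 1) = Mop (X 1) * Dop 1 + 1 := by rw [Dop_mul_Mop_X, if_pos rfl]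
  have hU1 : Dop 1 * U1op k = (Mop (X 1) * Dop 1 + 1) * Eop k - Sop k * Dop 1 := by
    rw [U1op_eq, mul_sub, ← mul_assoc, hX, Dop_one_mul_Sop]
  rw [mul_add, hU1, mul_smul_comm, hX, sum_Mop_X_mul_Tmu hk]
  simp only [add_mul, mul_add, sub_mul, mul_sub, smul_mul_assoc, mul_smul_comm, one_mul, mul_one,
    mul_assoc, (Eop_commute_U0op k).eq]
  module

end

/-- Formulas `(F_j(μ))` : for `j ∈ [2,k]`,
`∂_j (U_1 + μσ_1) + (λ+1) ∂_{j-1}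
  = -Σ_{h=1}^{k-1} (h+1) σ_{h+1} A_{h,j} + σ_1 T^j_μ - ∂_{j-1}(U_0 - λ)`,
and for `j = 1`,
`∂_1 (U_1 + μσ_1) - (λ+1)(E+μ) = (E+μ)(U_0 - λ) - Σ_{h=1}^{k-1} (h+1) σ_{h+1} T^{h+1}_μ`. -/
theorem magic_formulas_Fj (k : ℕ) (hk : 1 ≤ k) (μ lam : ℂ) :
    (∀ j ∈ Icc 2 k,
      Dop j * (U1op k + μ • Mop (X 1)) + (lam + 1) • Dop (j - 1) =
        -(∑ h ∈ Icc 1 (k - 1), ((h + 1 : ℕ) : ℂ) • (Mop (X (h + 1)) * Aop h j)) +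
          Mop (X 1) * Tmu k μ j -
          Dop (j - 1) * (U0op k - lam • (1 : Module.End ℂ WPoly))) ∧
    (Dop 1 * (U1op k + μ • Mop (X 1)) -
        (lam + 1) • (Eop k + μ • (1 : Module.End ℂ WPoly)) =
      (Eop k + μ • (1 : Module.End ℂ WPoly)) *
          (U0op k - lam • (1 : Module.End ℂ WPoly)) -
        ∑ h ∈ Icc 1 (k - 1), ((h + 1 : ℕ) : ℂ) • (Mop (X (h + 1)) * Tmu k μ (h + 1))) :=
  ⟨fun _ hj => magic_formula_Fj_of_mem_Icc hj μ lam, magic_formula_F1 hk μ lam⟩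

end
end
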